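/- For every m ≥ 5, the four Toggle positions P_{0,1}(m,1), P_{1,0}(m,1), P_{0,1}(m,2), and P_{1,0}(m,2) all have the same Nimber: G(P_{0,1}(m,1)) = G(P_{1,0}(m,1)) = G(P_{0,1}(m,2)) = G(P_{1,0}(m,2)). -/

import Mathlib

namespace Toggle

variable {V : Type*} [Fintype V] [DecidableEq V]

/-- The closed neighborhood `N[v]` of a vertex as a `Finset`. -/
def closedNbhd (G : SimpleGraph V) [DecidableRel G.Adj] (v : V) : Finset V :=
  insert v (G.neighborFinset v)

/-- The result of a Toggle move at `v`: flip the weight of every vertex in `N[v]`. -/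
def move (G : SimpleGraph V) [DecidableRel G.Adj] (ω : V → Bool) (v : V) : V → Bool :=
  fun u => if u ∈ closedNbhd G v then !(ω u) else ω u

/-- Total weight of a position. -/
def weight (ω : V → Bool) : ℕ := (Finset.univ.filter (fun u => ω u = true)).card

/-- Weight of a position over the closed neighborhood of `v`. -/
def nbhdWeight (G : SimpleGraph V) [DecidableRel G.Adj] (ω : V → Bool) (v : V) : ℕ :=
  ((closedNbhd G v).filter (fun u => ω u = true)).card

/-- A Toggle move at `v` is legal iff `ω v = 1` and the move strictly decreases the
weight over `N[v]`. -/
def IsLegal (G : SimpleGraph V) [DecidableRel G.Adj] (ω : V → Bool) (v : V) : Prop :=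
  ω v = true ∧ nbhdWeight G (move G ω v) v < nbhdWeight G ω v

instance (G : SimpleGraph V) [DecidableRel G.Adj] (ω : V → Bool) (v : V) :
    Decidable (IsLegal G ω v) :=
  inferInstanceAs (Decidable (ω v = true ∧ nbhdWeight G (move G ω v) v < nbhdWeight G ω v))

theorem weight_move_lt (G : SimpleGraph V) [DecidableRel G.Adj] {ω : V → Bool} {v : V}
    (h : IsLegal G ω v) : weight (move G ω v) < weight ω := by
  have key : ∀ ψ : V → Bool,
      weight ψ = ((closedNbhd G v).filter (fun u => ψ u = true)).card
        + ((Finset.univ \ closedNbhd G v).filter (fun u => ψ u = true)).card := by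
    intro ψ
    rw [weight, ← Finset.card_union_of_disjoint
      (Finset.disjoint_filter_filter Finset.disjoint_sdiff)]
    congr 1
    ext u
    simp only [Finset.mem_filter, Finset.mem_union, Finset.mem_sdiff, Finset.mem_univ,
      true_and]
    tauto
  have hout : ((Finset.univ \ closedNbhd G v).filter (fun u => move G ω v u = true))
      = ((Finset.univ \ closedNbhd G v).filter (fun u => ω u = true)) := by
    apply Finset.filter_congr
    intro u hu
    rw [Finset.mem_sdiff] at hu
    simp [move, hu.2]
  have h2 := h.2
  rw [key (move G ω v), key ω, hout]
  unfold nbhdWeight at h2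
  omega

/-- Minimal excludant of a finite set of naturals. -/
noncomputable def mex (s : Finset ℕ) : ℕ := sInf {n : ℕ | n ∉ s}

/-- The Nimber (Grundy value) of a Toggle position. -/
noncomputable def grundy (G : SimpleGraph V) [DecidableRel G.Adj] (ω : V → Bool) : ℕ :=
  mex ((Finset.univ.filter (fun v => IsLegal G ω v)).attach.image
    (fun v => grundy G (move G ω v.1)))
termination_by weight ω
decreasing_by
  have hv := v.2
  rw [Finset.mem_filter] at hv
  exact weight_move_lt G hv.2

/-- One legal Toggle move transforms `ω` into `ω'`. -/
def Step (G : SimpleGraph V) [DecidableRel G.Adj] (ω ω' : V → Bool) : Prop :=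
  ∃ v, IsLegal G ω v ∧ ω' = move G ω v

/-- `ω'` is reachable from `ω` by a (possibly empty) sequence of legal moves. -/
def Reach (G : SimpleGraph V) [DecidableRel G.Adj] (ω ω' : V → Bool) : Prop :=
  Relation.ReflTransGen (Step G) ω ω'

/-- `v` is terminally unplayable at `ω`: unplayable at `ω` and at every position
reachable from `ω`. -/
def TerminallyUnplayable (G : SimpleGraph V) [DecidableRel G.Adj] (ω : V → Bool) (v : V) :
    Prop :=
  ∀ ω', Reach G ω ω' → ¬ IsLegal G ω' v

/-- `v` is penultimately unplayable for the initial position `ω₀`: at every position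
reachable from `ω₀`, after any legal move at a vertex `u ∈ N[v]`, the vertex `v` is
terminally unplayable. -/
def PenultimatelyUnplayableAt (G : SimpleGraph V) [DecidableRel G.Adj] (ω₀ : V → Bool)
    (v : V) : Prop :=
  ∀ ω', Reach G ω₀ ω' → ∀ u ∈ closedNbhd G v, IsLegal G ω' u →
    TerminallyUnplayable G (move G ω' u) v

/-- The position `ω₀` is penultimately unplayable if every vertex is. -/
def PenultimatelyUnplayable (G : SimpleGraph V) [DecidableRel G.Adj] (ω₀ : V → Bool) :
    Prop :=
  ∀ v, PenultimatelyUnplayableAt G ω₀ v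

/-- The path graph on `Fin n`, vertices `0, 1, …, n-1` in order. -/
def pathGraph (n : ℕ) : SimpleGraph (Fin n) :=
  SimpleGraph.fromRel (fun a b => (a : ℕ) + 1 = (b : ℕ))

instance (n : ℕ) : DecidableRel (pathGraph n).Adj := fun a b =>
  decidable_of_iff _ (SimpleGraph.fromRel_adj _ a b).symm

/-- The 2×m grid graph `L_{2,m}` (0-indexed rows and columns). -/
def gridGraph (m : ℕ) : SimpleGraph (Fin 2 × Fin m) :=
  SimpleGraph.fromRel (fun a b =>
    (a.1 = b.1 ∧ (a.2 : ℕ) + 1 = (b.2 : ℕ)) ∨ (a.2 = b.2 ∧ (a.1 : ℕ) + 1 = (b.1 : ℕ)))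

instance (m : ℕ) : DecidableRel (gridGraph m).Adj := fun a b =>
  decidable_of_iff _ (SimpleGraph.fromRel_adj _ a b).symm

/-- The generalized Petersen graph `P(m,k)`; the vertex `(0, i)` is the outer vertex
`u_i` and `(1, i)` is the inner vertex `w_i` (0-indexed). -/
def petersen (m k : ℕ) : SimpleGraph (Fin 2 × Fin m) :=
  SimpleGraph.fromRel (fun a b =>
    (a.1 = 0 ∧ b.1 = 0 ∧ ((a.2 : ℕ) + 1) % m = (b.2 : ℕ)) ∨
    (a.1 = 0 ∧ b.1 = 1 ∧ a.2 = b.2) ∨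
    (a.1 = 1 ∧ b.1 = 1 ∧ ((a.2 : ℕ) + k) % m = (b.2 : ℕ)))

instance (m k : ℕ) : DecidableRel (petersen m k).Adj := fun a b =>
  decidable_of_iff _ (SimpleGraph.fromRel_adj _ a b).symm

/-- The position on `P(m,k)` where every outer vertex has weight 1 and every inner
vertex has weight 0. -/
def P01 (m : ℕ) : Fin 2 × Fin m → Bool := fun p => decide (p.1 = 0)

/-- The position on `P(m,k)` where every inner vertex has weight 1 and every outer
vertex has weight 0. -/
def P10 (m : ℕ) : Fin 2 × Fin m → Bool := fun p => decide (p.1 = 1)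

/-- The position where every vertex has weight 1. -/
def P11 (m : ℕ) : Fin 2 × Fin m → Bool := fun _ => true

/-- The Toggle position `H_m` on `L_{2,m}` (columns 0-indexed): for `m ≠ 3`, weight 0
exactly at `(0,0), (0,m-1), (1,0), (1,1), (1,m-2), (1,m-1)`; for `m = 3`, weight 0
exactly at `(0,0), (0,2), (1,0), (1,2)`. -/
def Hpos (m : ℕ) : Fin 2 × Fin m → Bool := fun p =>
  if m = 3 then !(decide ((p.2 : ℕ) = 0 ∨ (p.2 : ℕ) = 2))
  else !(decide ((p.1 = 0 ∧ ((p.2 : ℕ) = 0 ∨ (p.2 : ℕ) = m - 1)) ∨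
                 (p.1 = 1 ∧ ((p.2 : ℕ) ≤ 1 ∨ m - 2 ≤ (p.2 : ℕ)))))

/-- The Toggle position `D_m` on `L_{2,m}` (columns 0-indexed): weight 0 exactly at
`(0,0), (0,m-2), (0,m-1), (1,0), (1,1), (1,m-1)`. -/
def Dpos (m : ℕ) : Fin 2 × Fin m → Bool := fun p =>
  !(decide ((p.1 = 0 ∧ ((p.2 : ℕ) = 0 ∨ m - 2 ≤ (p.2 : ℕ))) ∨
            (p.1 = 1 ∧ ((p.2 : ℕ) ≤ 1 ∨ (p.2 : ℕ) = m - 1))))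

/-- The Nimber of the position `H_m`. -/
noncomputable def GH (m : ℕ) : ℕ := grundy (gridGraph m) (Hpos m)

/-- The Nimber of the position `D_m`. -/
noncomputable def GD (m : ℕ) : ℕ := grundy (gridGraph m) (Dpos m)

/-- The cycle graph `C_m` on `Fin m`. -/
def cycleGraph (m : ℕ) : SimpleGraph (Fin m) :=
  SimpleGraph.fromRel (fun a b => ((a : ℕ) + 1) % m = (b : ℕ))

open scoped Classical in
/-- The Nimber of a position of Jacob's Ladder on `C_m`: a position is the `Finset` of
not-yet-removed vertices, and a move at a remaining vertex `v` removes all remaining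
vertices at distance at most 2 from `v` in `C_m`. -/
noncomputable def jlGrundy (m : ℕ) (S : Finset (Fin m)) : ℕ :=
  mex (S.attach.image (fun v =>
    jlGrundy m (S.filter (fun u => 2 < (cycleGraph m).dist v.1 u))))
termination_by S.card
decreasing_by
  apply Finset.card_lt_card
  rw [Finset.ssubset_iff_of_subset (Finset.filter_subset _ _)]
  exact ⟨v.1, v.2, by simp [SimpleGraph.dist_self]⟩

end Toggle

/-!
A closed neighbourhood of `P(m,k)` (`m ≥ 5`, `k ∈ {1,2}`) has four vertices, so a move at a lit
vertex is legal iff at least two of its three neighbours are lit. Starting from a position in which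
exactly one ring is lit, every move darkens three lit vertices `i - s, i, i + s` of that ring (`s`
its step) and lights the vertex `i` of the other ring, which can never be played afterwards
(invariant `Cleared`). Hence the game only sees the lit ring, and a bijection of vertices matching
the moves on it preserves the nimber: the identity relates `P_{0,1}(m,1)` and `P_{0,1}(m,2)`,
exchanging the rings relates `P_{0,1}(m,1)` and `P_{1,0}(m,1)`, and for odd `m` multiplying the
column index by `2⁻¹` relates `P_{1,0}(m,2)` and `P_{1,0}(m,1)`. For even `m`, `P_{0,1}(m,1)` and
`P_{1,0}(m,2)` both have nimber `0` by a mirror strategy: answer a move in column `i` by the move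
in column `i + m/2`, respectively `1 - i`.
-/

namespace Fin
open Fin.NatCast Fin.CommRing

variable {m : ℕ} [NeZero m]

lemma natCast_ne_zero_of_lt {n : ℕ} (h0 : 0 < n) (hn : n < m) : (n : Fin m) ≠ 0 := by
  rw [ne_eq, Fin.natCast_eq_zero]
  exact fun h => absurd (Nat.le_of_dvd h0 h) (by omega)

lemma two_mul_ne_one (he : Even m) (x : Fin m) : 2 * x ≠ 1 := by
  obtain ⟨n, rfl⟩ := he
  have hdvd : 2 ∣ n + n := ⟨n, by ring⟩
  intro h
  have hval := congrArg (fun y : Fin (n + n) => y.val % 2) h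
  simp only [Fin.val_mul, Fin.coe_ofNat_eq_mod, Nat.mod_mod_of_dvd _ hdvd] at hval
  rw [Nat.mul_mod, Nat.mod_mod_of_dvd _ hdvd] at hval
  simp at hval

lemma exists_two_mul_eq_one (ho : Odd m) : ∃ t : Fin m, 2 * t = 1 := by
  obtain ⟨n, rfl⟩ := ho
  refine ⟨(n + 1 : ℕ), ?_⟩
  have : ((2 * n + 1 : ℕ) : Fin (2 * n + 1)) = 0 := Fin.natCast_self _
  push_cast at this ⊢
  linear_combination this

lemma exists_add_self_eq_zero_of_even (hm : 5 ≤ m) (he : Even m) :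
    ∃ h : Fin m, h + h = 0 ∧ h ≠ 0 ∧ h ≠ 1 ∧ h ≠ -1 ∧ h ≠ 2 ∧ h ≠ -2 := by
  obtain ⟨n, rfl⟩ := he
  have key (a : ℕ) (h0 : 0 < a) (ha : a < n + n) : ((a : ℕ) : Fin (n + n)) ≠ 0 :=
    natCast_ne_zero_of_lt h0 ha
  refine ⟨(n : ℕ), by exact_mod_cast Fin.natCast_self (n + n), key n (by omega) (by omega),
    fun e => key (n - 1) (by omega) (by omega) ?_, fun e => key (n + 1) (by omega) (by omega) ?_,
    fun e => key (n - 2) (by omega) (by omega) ?_, fun e => key (n + 2) (by omega) (by omega) ?_⟩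
  · rw [Nat.cast_sub (by omega), e]; simp
  · rw [Nat.cast_add, e]; simp
  · rw [Nat.cast_sub (by omega), e]; simp
  · rw [Nat.cast_add, e]; simp

lemma one_sub_ne_self (r : Fin 2) : 1 - r ≠ r := by
  fin_cases r <;> decide

end Fin

namespace Toggle

section General

variable {V V' : Type*} [Fintype V] [DecidableEq V] [Fintype V'] [DecidableEq V']
  {G : SimpleGraph V} [DecidableRel G.Adj] {G' : SimpleGraph V'} [DecidableRel G'.Adj]

lemma mem_closedNbhd_iff {v x : V} : x ∈ closedNbhd G v ↔ x = v ∨ G.Adj v x := by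
  simp [closedNbhd]

lemma mex_eq_zero_iff {s : Finset ℕ} : mex s = 0 ↔ 0 ∉ s := by
  obtain ⟨n, hn⟩ := Infinite.exists_notMem_finset s
  have : {n : ℕ | n ∉ s} ≠ ∅ := Set.nonempty_iff_ne_empty.mp ⟨n, hn⟩
  simp [mex, Nat.sInf_eq_zero, this]

lemma grundy_eq_zero_iff {ω : V → Bool} :
    grundy G ω = 0 ↔ ∀ v, IsLegal G ω v → grundy G (move G ω v) ≠ 0 := by
  rw [grundy, mex_eq_zero_iff]
  simp

lemma grundy_congr {ω : V → Bool} {ω' : V' → Bool}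
    (h : ∀ n, (∃ v, IsLegal G ω v ∧ grundy G (move G ω v) = n) ↔
      ∃ v', IsLegal G' ω' v' ∧ grundy G' (move G' ω' v') = n) :
    grundy G ω = grundy G' ω' := by
  rw [grundy, grundy]
  congr 1
  ext n
  simpa using h n

lemma isLegal_iff {ω : V → Bool} {v : V} :
    IsLegal G ω v ↔ ω v = true ∧ (closedNbhd G v).card < 2 * nbhdWeight G ω v := by
  have hflip : (closedNbhd G v).filter (fun u => move G ω v u = true)
      = (closedNbhd G v).filter (fun u => ¬ ω u = true) :=
    Finset.filter_congr fun u hu => by simp [move, hu]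
  have hsplit := Finset.card_filter_add_card_filter_not (s := closedNbhd G v)
    (fun u => ω u = true)
  rw [IsLegal, nbhdWeight, nbhdWeight, hflip]
  exact and_congr_right fun _ => by omega

lemma isLegal_congr {ω ω' : V → Bool} {v : V} (h : ∀ u ∈ closedNbhd G v, ω u = ω' u) :
    IsLegal G ω v ↔ IsLegal G ω' v := by
  have hv : ω v = ω' v := h v (Finset.mem_insert_self _ _)
  have hw : nbhdWeight G ω v = nbhdWeight G ω' v := by
    rw [nbhdWeight, nbhdWeight, Finset.filter_congr fun u hu => by rw [h u hu]]
  rw [isLegal_iff, isLegal_iff, hv, hw]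

lemma isLegal_iff_of_closedNbhd_eq {ω : V → Bool} {v a b c : V}
    (hN : closedNbhd G v = {v, a, b, c}) (hva : v ≠ a) (hvb : v ≠ b) (hvc : v ≠ c)
    (hab : a ≠ b) (hac : a ≠ c) (hbc : b ≠ c) (hc : ω v = true → ω c = false) :
    IsLegal G ω v ↔ ω v = true ∧ ω a = true ∧ ω b = true := by
  rw [isLegal_iff, nbhdWeight, hN]
  by_cases hv : ω v = true
  · have hc := hc hv
    cases ha : ω a <;> cases hb : ω b <;>
      simp [Finset.filter_insert, Finset.filter_singleton, Finset.card_insert_of_notMem, hv, ha,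
        hb, hc, hva, hvb, hvc, hab, hac, hbc]
  · simp [hv]

lemma mem_closedNbhd_image_iff (σ : V ≃ V') {v x : V}
    (hN : (closedNbhd G v).image σ = closedNbhd G' (σ v)) :
    σ x ∈ closedNbhd G' (σ v) ↔ x ∈ closedNbhd G v := by
  rw [← hN, σ.injective.mem_finset_image]

lemma move_comp_symm (σ : V ≃ V') {v : V}
    (hN : (closedNbhd G v).image σ = closedNbhd G' (σ v)) (ω : V → Bool) :
    move G' (ω ∘ σ.symm) (σ v) = move G ω v ∘ σ.symm := by
  funext x
  obtain ⟨x, rfl⟩ := σ.surjective x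
  simp [move, mem_closedNbhd_image_iff σ hN]

lemma isLegal_comp_symm_iff (σ : V ≃ V') {v : V}
    (hN : (closedNbhd G v).image σ = closedNbhd G' (σ v)) (ω : V → Bool) :
    IsLegal G' (ω ∘ σ.symm) (σ v) ↔ IsLegal G ω v := by
  have hcard : (closedNbhd G' (σ v)).card = (closedNbhd G v).card := by
    rw [← hN, Finset.card_image_of_injective _ σ.injective]
  have hw : nbhdWeight G' (ω ∘ σ.symm) (σ v) = nbhdWeight G ω v := by
    rw [nbhdWeight, nbhdWeight, ← hN, Finset.filter_image,
      Finset.card_image_of_injective _ σ.injective]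
    simp
  rw [isLegal_iff, isLegal_iff, hcard, hw]
  simp

theorem grundy_comp_symm_of_invariant (σ : V ≃ V') (Φ : (V → Bool) → Prop)
    (hΦ : ∀ ω v, Φ ω → IsLegal G ω v → Φ (move G ω v))
    (hN : ∀ ω v, Φ ω → IsLegal G ω v ∨ IsLegal G' (ω ∘ σ.symm) (σ v) →
      (closedNbhd G v).image σ = closedNbhd G' (σ v))
    (ω : V → Bool) (hω : Φ ω) : grundy G' (ω ∘ σ.symm) = grundy G ω := by
  induction h : weight ω using Nat.strong_induction_on generalizing ω with
  | _ n ih =>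
  subst h
  refine grundy_congr fun n => ?_
  rw [← σ.exists_congr_right]
  refine exists_congr fun v => ?_
  by_cases hv : IsLegal G ω v ∨ IsLegal G' (ω ∘ σ.symm) (σ v)
  · have hNv := hN ω v hω hv
    rw [isLegal_comp_symm_iff σ hNv]
    refine and_congr_right fun hl => ?_
    rw [move_comp_symm σ hNv, ih _ (weight_move_lt G hl) _ (hΦ ω v hω hl) rfl]
  · push Not at hv
    simp [hv.1, hv.2]

/-- Tweedledum–Tweedledee: on a `σ`-symmetric position the second player answers every move
`v` by `σ v`, which is legal because the two neighbourhoods are disjoint. -/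
theorem grundy_eq_zero_of_involutive (σ : Equiv.Perm V) (hσ : Function.Involutive σ)
    (hN : ∀ v, (closedNbhd G v).image σ = closedNbhd G (σ v)) (Φ : (V → Bool) → Prop)
    (hΦ : ∀ ω v, Φ ω → IsLegal G ω v → Φ (move G ω v))
    (hdisj : ∀ ω v, Φ ω → IsLegal G ω v → Disjoint (closedNbhd G v) (closedNbhd G (σ v)))
    (ω : V → Bool) (hω : Φ ω) (hsymm : ω ∘ σ = ω) : grundy G ω = 0 := by
  induction h : weight ω using Nat.strong_induction_on generalizing ω with
  | _ n ih =>
  subst h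
  have hσω : ∀ x, ω (σ x) = ω x := congrFun hsymm
  have hmem : ∀ v x, σ x ∈ closedNbhd G v ↔ x ∈ closedNbhd G (σ v) := fun v x => by
    rw [← mem_closedNbhd_image_iff σ (hN (σ v)), hσ v]
  refine grundy_eq_zero_iff.mpr fun v hv hv0 => ?_
  set ω₁ := move G ω v
  have hσv : IsLegal G ω₁ (σ v) := by
    have hsymm' : ω ∘ σ.symm = ω := funext fun x => by
      simpa using (hσω (σ.symm x)).symm
    refine (isLegal_congr fun u hu => ?_).mpr
      (hsymm' ▸ (isLegal_comp_symm_iff σ (hN v) ω).mpr hv)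
    have : u ∉ closedNbhd G v := Finset.disjoint_right.mp (hdisj ω v hω hv) hu
    simp [ω₁, move, this]
  set ω₂ := move G ω₁ (σ v)
  have hsymm₂ : ω₂ ∘ σ = ω₂ := funext fun x => by
    simp only [Function.comp_apply, ω₂, ω₁, move, hmem, hσ v, hσω]
    by_cases h1 : x ∈ closedNbhd G v <;> by_cases h2 : x ∈ closedNbhd G (σ v) <;> simp [h1, h2]
  have hlt : weight ω₂ < weight ω := (weight_move_lt G hσv).trans (weight_move_lt G hv)
  exact grundy_eq_zero_iff.mp hv0 (σ v) hσv
    (ih _ hlt ω₂ (hΦ _ _ (hΦ ω v hω hv) hσv) hsymm₂ rfl)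

end General

section Petersen
open Fin.NatCast Fin.CommRing

variable {m : ℕ}

/-- An invariant of the positions reachable from the one in which exactly ring `r` is lit:
a lit vertex `(1 - r, i)` records a move at `(r, i)`, which darkened the triple `i - s, i, i + s`
of ring `r` (`s` the step of ring `r`), and no two lit vertices of ring `1 - r` are `d` apart. -/
def Cleared (r : Fin 2) (s d : Fin m) (ω : Fin 2 × Fin m → Bool) : Prop :=
  ∀ i, ω (1 - r, i) = true →
    ω (r, i - s) = false ∧ ω (r, i) = false ∧ ω (r, i + s) = false ∧
      ω (1 - r, i + d) = false

lemma cleared_P01 (s d : Fin m) : Cleared 0 s d (P01 m) := fun i hi => by simp [P01] at hi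

lemma cleared_P10 (s d : Fin m) : Cleared 1 s d (P10 m) := fun i hi => by simp [P10] at hi

variable [NeZero m]

def ringStep (k : ℕ) (r : Fin 2) : Fin m := if r = 0 then 1 else (k : Fin m)

lemma val_add_mod_eq_iff (i j : Fin m) (c : ℕ) :
    ((i : ℕ) + c) % m = j ↔ i + (c : Fin m) = j := by
  rw [Fin.ext_iff, Fin.val_add, Fin.val_natCast, Nat.add_mod_mod]

lemma closedNbhd_petersen (k : ℕ) (r : Fin 2) (i : Fin m) :
    closedNbhd (petersen m k) (r, i) =
      {(r, i), (r, i + ringStep k r), (r, i - ringStep k r), (1 - r, i)} := by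
  ext ⟨r', j⟩
  rw [mem_closedNbhd_iff]
  by_cases hx : (r', j) = (r, i)
  · simp [hx]
  · simp only [petersen, SimpleGraph.fromRel_adj, hx, Ne.symm hx, ne_eq, not_false_eq_true,
      true_and, false_or, Finset.mem_insert, Finset.mem_singleton, Prod.mk.injEq, ringStep]
    have h1 : ∀ a b : Fin m, ((a : ℕ) + 1) % m = b ↔ a + 1 = b := fun a b => by
      simpa using val_add_mod_eq_iff a b 1
    simp only [h1, val_add_mod_eq_iff]
    fin_cases r <;> fin_cases r'
    all_goals simp [eq_sub_iff_add_eq, eq_comm (b := j)]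

lemma isLegal_petersen_iff {k : ℕ} {r : Fin 2} {s : Fin m} (hs : ringStep k r = s)
    (hs2 : 2 * s ≠ 0) {ω : Fin 2 × Fin m → Bool} {i : Fin m}
    (hc : ω (r, i) = true → ω (1 - r, i) = false) :
    IsLegal (petersen m k) ω (r, i) ↔
      ω (r, i) = true ∧ ω (r, i + s) = true ∧ ω (r, i - s) = true := by
  have hs0 : s ≠ 0 := fun h => hs2 (by rw [h, mul_zero])
  have hr := Fin.one_sub_ne_self r
  refine isLegal_iff_of_closedNbhd_eq (hs ▸ closedNbhd_petersen k r i) ?_ ?_ ?_ ?_ ?_ ?_ hc <;>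
    simp only [ne_eq, Prod.mk.injEq, true_and, hr.symm, false_and, not_false_eq_true] <;>
    intro h
  · exact hs0 (by linear_combination -h)
  · exact hs0 (by linear_combination h)
  · exact hs2 (by linear_combination h)

variable {k : ℕ} {r : Fin 2} {s d : Fin m} {ω : Fin 2 × Fin m → Bool}

lemma isLegal_iff_of_cleared (hk : ∀ r, 2 * ringStep k r ≠ (0 : Fin m))
    (hs : ringStep k r = s) (hd : d = ringStep k (1 - r) ∨ d = 2 * ringStep k (1 - r))
    (hω : Cleared r s d ω) {v : Fin 2 × Fin m} :
    IsLegal (petersen m k) ω v ↔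
      v.1 = r ∧ ω (r, v.2 - s) = true ∧ ω (r, v.2) = true ∧ ω (r, v.2 + s) = true := by
  obtain ⟨r', i⟩ := v
  have hr' : r' = r ∨ r' = 1 - r := by fin_cases r <;> fin_cases r' <;> decide
  rcases hr' with rfl | rfl
  · have hc : ω (r', i) = true → ω (1 - r', i) = false := fun h => by
      by_contra h'
      simp [(hω i (by simpa using h')).2.1] at h
    rw [isLegal_petersen_iff hs (hs ▸ hk r') hc]
    tauto
  · have hc : ω (1 - r, i) = true → ω (1 - (1 - r), i) = false := fun h => by
      simpa using (hω i h).2.1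
    rw [isLegal_petersen_iff rfl (hk _) hc]
    simp only [Fin.one_sub_ne_self r, false_and, iff_false, not_and]
    intro h hplus hminus
    rcases hd with rfl | rfl
    · simp [(hω i h).2.2.2] at hplus
    · have := (hω _ hminus).2.2.2
      rw [show i - ringStep k (1 - r) + 2 * ringStep k (1 - r) = i + ringStep k (1 - r) by ring]
        at this
      simp [this] at hplus

/-- A lit vertex `d` away from column `j` records a move that darkened `j - s` or `j + s`. -/
lemma Cleared.ne_of_lit (hω : Cleared r s d ω) (hds : d = s ∨ d = 2 * s) {j x : Fin m}
    (hjm : ω (r, j - s) = true) (hjp : ω (r, j + s) = true) (hx : ω (1 - r, x) = true) :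
    x ≠ j + d ∧ x + d ≠ j := by
  obtain ⟨h₁, h₂, h₃, -⟩ := hω x hx
  constructor <;> rintro rfl <;> rcases hds with rfl | rfl
  · simp_all
  · simp_all [show j + 2 * s - s = j + s by ring]
  · simp_all
  · simp_all [show x + s = x + 2 * s - s by ring]

lemma Cleared.move (hk : ∀ r, 2 * ringStep k r ≠ (0 : Fin m))
    (hs : ringStep k r = s) (hd : d = ringStep k (1 - r) ∨ d = 2 * ringStep k (1 - r))
    (hds : d = s ∨ d = 2 * s) (hω : Cleared r s d ω) {v : Fin 2 × Fin m}
    (hv : IsLegal (petersen m k) ω v) : Cleared r s d (move (petersen m k) ω v) := by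
  obtain ⟨rfl, hjm, hj, hjp⟩ := (isLegal_iff_of_cleared hk hs hd hω).mp hv
  obtain ⟨r, j⟩ := v
  have hr := Fin.one_sub_ne_self r
  have hmove : ∀ x, move (petersen m k) ω (r, j) x =
      if x = (r, j) ∨ x = (r, j + s) ∨ x = (r, j - s) ∨ x = (1 - r, j) then !ω x else ω x :=
    fun x => by simp [move, closedNbhd_petersen, hs]
  have hring : ∀ x, ω (r, x) = false → move (petersen m k) ω (r, j) (r, x) = false := by
    intro x hx
    rw [hmove, if_neg]
    · exact hx
    simp only [Prod.mk.injEq, true_and, hr.symm, false_and, or_false]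
    rintro (rfl | rfl | rfl) <;> simp_all
  have hmark : ∀ x, x ≠ j → move (petersen m k) ω (r, j) (1 - r, x) = ω (1 - r, x) := by
    intro x hx
    rw [hmove, if_neg]
    simp [Prod.ext_iff, hx, hr]
  have hd0 : d ≠ 0 := by
    have := hs ▸ hk r
    rcases hds with rfl | rfl
    · exact fun h => this (by rw [h, mul_zero])
    · exact this
  intro i hi
  by_cases hij : i = j
  · subst hij
    refine ⟨?_, ?_, ?_, ?_⟩
    · simp [hmove, hjm]
    · simp [hmove, hj]
    · simp [hmove, hjp]
    · rw [hmark _ (by simpa using hd0)]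
      exact Bool.eq_false_iff.mpr fun h => (hω.ne_of_lit hds hjm hjp h).1 rfl
  · have hi' : ω (1 - r, i) = true := by rwa [hmark i hij] at hi
    obtain ⟨h₁, h₂, h₃, h₄⟩ := hω i hi'
    refine ⟨hring _ h₁, hring _ h₂, hring _ h₃, ?_⟩
    rw [hmark _ (hω.ne_of_lit hds hjm hjp hi').2]
    exact h₄

def colAffine (a : (Fin m)ˣ) (b : Fin m) : Equiv.Perm (Fin 2 × Fin m) :=
  (Equiv.refl (Fin 2)).prodCongr ((Units.mulLeft a).trans (Equiv.addRight b))

def swapRings : Equiv.Perm (Fin 2 × Fin m) :=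
  (Equiv.subLeft (1 : Fin 2)).prodCongr (Equiv.refl (Fin m))

lemma colAffine_apply (a : (Fin m)ˣ) (b : Fin m) (r : Fin 2) (i : Fin m) :
    colAffine a b (r, i) = (r, (a : Fin m) * i + b) := rfl

lemma colAffine_symm_apply (a : (Fin m)ˣ) (b : Fin m) (r : Fin 2) (i : Fin m) :
    (colAffine a b).symm (r, i) = (r, ↑a⁻¹ * (i - b)) := by
  rw [Equiv.symm_apply_eq, colAffine_apply, ← mul_assoc, Units.mul_inv, one_mul, sub_add_cancel]

lemma image_closedNbhd_colAffine {k k' : ℕ} (a : (Fin m)ˣ) (b : Fin m) (r : Fin 2) (i : Fin m)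
    (h : (a : Fin m) * ringStep k r = ringStep k' r ∨
      (a : Fin m) * ringStep k r = -ringStep k' r) :
    (closedNbhd (petersen m k) (r, i)).image (colAffine a b) =
      closedNbhd (petersen m k') (colAffine a b (r, i)) := by
  rw [colAffine_apply, closedNbhd_petersen, closedNbhd_petersen]
  simp only [Finset.image_insert, Finset.image_singleton, colAffine_apply]
  rcases h with h | h
  · rw [show (a : Fin m) * (i + ringStep k r) + b = (a : Fin m) * i + b + ringStep k' r by
        rw [← h]; ring,
      show (a : Fin m) * (i - ringStep k r) + b = (a : Fin m) * i + b - ringStep k' r by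
        rw [← h]; ring]
  · rw [show (a : Fin m) * (i + ringStep k r) + b = (a : Fin m) * i + b - ringStep k' r by
        rw [← neg_neg (ringStep k' r), ← h]; ring,
      show (a : Fin m) * (i - ringStep k r) + b = (a : Fin m) * i + b + ringStep k' r by
        rw [← neg_neg (ringStep k' r), ← h]; ring,
      Finset.insert_comm (r, (a : Fin m) * i + b - ringStep k' r)]

lemma image_closedNbhd_swapRings (v : Fin 2 × Fin m) :
    (closedNbhd (petersen m 1) v).image swapRings = closedNbhd (petersen m 1) (swapRings v) := by
  obtain ⟨r, i⟩ := v
  have hstep : ∀ r, ringStep 1 r = (1 : Fin m) := by simp [ringStep]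
  simp [swapRings, closedNbhd_petersen, hstep, Finset.image_insert]

lemma Cleared.comp_colAffine_symm (hω : Cleared r s d ω) (a : (Fin m)ˣ) (b : Fin m) :
    Cleared r ((a : Fin m) * s) ((a : Fin m) * d) (ω ∘ (colAffine a b).symm) := by
  intro i hi
  simp only [Function.comp_apply, colAffine_symm_apply] at hi ⊢
  have e : ∀ c, (↑a⁻¹ : Fin m) * (i + (a : Fin m) * c - b) = ↑a⁻¹ * (i - b) + c :=
    fun c => by linear_combination c * Units.inv_mul a
  rw [sub_eq_add_neg i, ← mul_neg, e, e, e, ← sub_eq_add_neg]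
  exact hω _ hi

lemma disjoint_closedNbhd_petersen (r : Fin 2) {i j : Fin m}
    (h0 : j - i ≠ 0) (h1 : j - i ≠ ringStep k r) (h2 : j - i ≠ -ringStep k r)
    (h3 : j - i ≠ 2 * ringStep k r) (h4 : j - i ≠ -(2 * ringStep k r)) :
    Disjoint (closedNbhd (petersen m k) (r, i)) (closedNbhd (petersen m k) (r, j)) := by
  rw [closedNbhd_petersen, closedNbhd_petersen, Finset.disjoint_left]
  have hr := Fin.one_sub_ne_self r
  intro x hx hx'
  simp only [Finset.mem_insert, Finset.mem_singleton] at hx hx'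
  rcases hx with rfl | rfl | rfl | rfl <;> rcases hx' with h | h | h | h <;>
    simp only [Prod.mk.injEq, hr, hr.symm, false_and, true_and] at h
  all_goals first
    | exact h0 (by linear_combination -h) | exact h1 (by linear_combination -h)
    | exact h2 (by linear_combination -h) | exact h3 (by linear_combination -h)
    | exact h4 (by linear_combination -h)

lemma two_mul_ringStep_ne_zero (hm : 5 ≤ m) (hk : k = 1 ∨ k = 2) (r : Fin 2) :
    2 * ringStep k r ≠ (0 : Fin m) := by
  have h2 : (2 : Fin m) ≠ 0 := by
    exact_mod_cast Fin.natCast_ne_zero_of_lt (m := m) (n := 2) (by norm_num) (by omega)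
  have h4 : (2 : Fin m) * 2 ≠ 0 := by
    norm_num
    exact_mod_cast Fin.natCast_ne_zero_of_lt (m := m) (n := 4) (by norm_num) (by omega)
  fin_cases r <;> rcases hk with rfl | rfl <;> simpa [ringStep]

lemma grundy_petersen_one_P10_eq_P01 :
    grundy (petersen m 1) (P10 m) = grundy (petersen m 1) (P01 m) := by
  have hswap : P01 m ∘ swapRings.symm = P10 m := by
    funext ⟨r, i⟩
    fin_cases r <;> rfl
  rw [← hswap]
  exact grundy_comp_symm_of_invariant swapRings (fun _ => True) (fun _ _ _ _ => trivial)
    (fun _ v _ _ => image_closedNbhd_swapRings v) (P01 m) trivial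

lemma grundy_petersen_two_P01_eq_one (hm : 5 ≤ m) :
    grundy (petersen m 2) (P01 m) = grundy (petersen m 1) (P01 m) := by
  have hlegal : ∀ k, k = 1 ∨ k = 2 → ∀ {ω}, Cleared 0 1 2 ω → ∀ {v},
      IsLegal (petersen m k) ω v → v.1 = 0 := by
    rintro k hk ω hω v hv
    refine ((isLegal_iff_of_cleared (two_mul_ringStep_ne_zero hm hk) ?_ ?_ hω).mp hv).1 <;>
      rcases hk with rfl | rfl <;> simp [ringStep]
  refine grundy_comp_symm_of_invariant (Equiv.refl _) (Cleared 0 1 2)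
    (fun ω v hω hv => hω.move (two_mul_ringStep_ne_zero hm (Or.inl rfl)) (by simp [ringStep])
      (by simp [ringStep]) (Or.inr (mul_one 2).symm) hv) ?_ (P01 m) (cleared_P01 1 2)
  rintro ω ⟨r, i⟩ hω hv
  obtain rfl : r = 0 := hv.elim (hlegal 1 (Or.inl rfl) hω) (hlegal 2 (Or.inr rfl) hω)
  simp [closedNbhd_petersen, ringStep]

lemma grundy_petersen_one_P01_eq_zero (hm : 5 ≤ m) (he : Even m) :
    grundy (petersen m 1) (P01 m) = 0 := by
  obtain ⟨h, hh, h0, h1, h1', h2, h2'⟩ := Fin.exists_add_self_eq_zero_of_even hm he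
  have hk := two_mul_ringStep_ne_zero (m := m) hm (Or.inl rfl)
  have hlegal : ∀ {ω}, Cleared 0 1 2 ω → ∀ {v}, IsLegal (petersen m 1) ω v → v.1 = 0 :=
    fun hω _ hv => ((isLegal_iff_of_cleared hk (by simp [ringStep]) (by simp [ringStep]) hω).mp
      hv).1
  have hinv : Function.Involutive (colAffine 1 h) := fun ⟨r, i⟩ => by
    simp only [colAffine_apply, Units.val_one, one_mul, add_assoc, hh, add_zero]
  refine grundy_eq_zero_of_involutive (colAffine 1 h) hinv
    (fun ⟨r, i⟩ => image_closedNbhd_colAffine 1 h r i (Or.inl (one_mul _))) (Cleared 0 1 2)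
    (fun ω v hω hv => hω.move hk (by simp [ringStep]) (by simp [ringStep])
      (Or.inr (mul_one 2).symm) hv) ?_ (P01 m) (cleared_P01 1 2) rfl
  rintro ω ⟨r, i⟩ hω hv
  obtain rfl : r = 0 := hlegal hω hv
  apply disjoint_closedNbhd_petersen <;> simp [ringStep, h0, h1, h1', h2, h2']

lemma grundy_petersen_two_P10_eq_zero (hm : 5 ≤ m) (he : Even m) :
    grundy (petersen m 2) (P10 m) = 0 := by
  have hk := two_mul_ringStep_ne_zero (m := m) hm (Or.inr rfl)
  have hlegal : ∀ {ω}, Cleared 1 2 2 ω → ∀ {v}, IsLegal (petersen m 2) ω v → v.1 = 1 :=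
    fun hω _ hv => ((isLegal_iff_of_cleared hk (by simp [ringStep]) (by simp [ringStep]) hω).mp
      hv).1
  have hinv : Function.Involutive (colAffine (-1) (1 : Fin m)) := fun ⟨r, i⟩ => by
    rw [colAffine_apply, colAffine_apply]
    simp
  refine grundy_eq_zero_of_involutive (colAffine (-1) 1) hinv
    (fun ⟨r, i⟩ => image_closedNbhd_colAffine (-1) 1 r i (Or.inr (by simp))) (Cleared 1 2 2)
    (fun ω v hω hv => hω.move hk (by simp [ringStep]) (by simp [ringStep]) (Or.inl rfl) hv) ?_
    (P10 m) (cleared_P10 2 2) rfl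
  rintro ω ⟨r, i⟩ hω hv
  obtain rfl : r = 1 := hlegal hω hv
  have hσ : colAffine (-1) 1 (1, i) = (1, 1 - i) := by
    rw [colAffine_apply]
    simp [neg_add_eq_sub]
  have h2 := Fin.two_mul_ne_one he
  have hstep : ringStep 2 1 = (2 : Fin m) := by simp [ringStep]
  rw [hσ]
  -- `1 - 2 i` is odd, while the column differences `0, ±2, ±4` of two overlapping
  -- neighbourhoods are even
  apply disjoint_closedNbhd_petersen <;> simp only [hstep, ne_eq] <;> intro e
  · exact h2 i (by linear_combination -e)
  · exact h2 (-i) (by linear_combination e)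
  · exact h2 (i - 1) (by linear_combination -e)
  · exact h2 (-i - 1) (by linear_combination e)
  · exact h2 (i - 2) (by linear_combination -e)

lemma grundy_petersen_one_P10_eq_two_of_odd (hm : 5 ≤ m) (ho : Odd m) :
    grundy (petersen m 1) (P10 m) = grundy (petersen m 2) (P10 m) := by
  obtain ⟨t, ht⟩ := Fin.exists_two_mul_eq_one ho
  set u : (Fin m)ˣ := Units.mkOfMulEqOne t 2 (by rw [mul_comm, ht])
  have hk1 := two_mul_ringStep_ne_zero (m := m) hm (Or.inl rfl)
  have hk2 := two_mul_ringStep_ne_zero (m := m) hm (Or.inr rfl)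
  have hP10 : P10 m ∘ (colAffine u 0).symm = P10 m := rfl
  rw [← hP10]
  refine grundy_comp_symm_of_invariant (colAffine u 0) (Cleared 1 2 2)
    (fun ω v hω hv => hω.move hk2 (by simp [ringStep]) (by simp [ringStep]) (Or.inl rfl) hv) ?_
    (P10 m) (cleared_P10 2 2)
  rintro ω ⟨r, i⟩ hω hv
  have hr : r = 1 := by
    rcases hv with hv | hv
    · exact ((isLegal_iff_of_cleared hk2 (by simp [ringStep]) (by simp [ringStep]) hω).mp hv).1
    · have hω' : Cleared 1 1 1 (ω ∘ (colAffine u 0).symm) := by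
        simpa [u, mul_comm t 2, ht] using hω.comp_colAffine_symm u 0
      exact ((isLegal_iff_of_cleared hk1 (by simp [ringStep]) (by simp [ringStep]) hω').mp hv).1
  subst hr
  exact image_closedNbhd_colAffine u 0 1 i (Or.inl (by simp [u, ringStep, mul_comm t 2, ht]))

end Petersen

end Toggle

/-- for `m ≥ 5`, the four Toggle positions `P_{0,1}(m,1)`,
`P_{1,0}(m,1)`, `P_{0,1}(m,2)`, `P_{1,0}(m,2)` all have the same Nimber. -/
theorem statement19 (m : ℕ) (hm : 5 ≤ m) :
    Toggle.grundy (Toggle.petersen m 1) (Toggle.P01 m)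
        = Toggle.grundy (Toggle.petersen m 1) (Toggle.P10 m) ∧
    Toggle.grundy (Toggle.petersen m 1) (Toggle.P10 m)
        = Toggle.grundy (Toggle.petersen m 2) (Toggle.P01 m) ∧
    Toggle.grundy (Toggle.petersen m 2) (Toggle.P01 m)
        = Toggle.grundy (Toggle.petersen m 2) (Toggle.P10 m) := by
  have : NeZero m := ⟨by omega⟩
  have h11 := Toggle.grundy_petersen_one_P10_eq_P01 (m := m)
  have h21 := Toggle.grundy_petersen_two_P01_eq_one hm
  have h22 : Toggle.grundy (Toggle.petersen m 2) (Toggle.P10 m)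
      = Toggle.grundy (Toggle.petersen m 1) (Toggle.P01 m) := by
    rcases Nat.even_or_odd m with he | ho
    · rw [Toggle.grundy_petersen_two_P10_eq_zero hm he,
        Toggle.grundy_petersen_one_P01_eq_zero hm he]
    · rw [← Toggle.grundy_petersen_one_P10_eq_two_of_odd hm ho, h11]
  exact ⟨h11.symm, h11.trans h21.symm, h21.trans h22.symm⟩
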